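/- arXiv:1101.0559 — 4 statements merged into one kernel-verified Lean document; each statement's English description precedes it below -/
import Mathlib

section
/- Let M ≥ 3 and let (X_n) be the unzipping walk with transition probabilities p_1 = 1 and p_x ∈ (0,1) for 2 ≤ x ≤ M−1. For any vector of positive integers k = (k_1,…,k_{M−1}) with k_{M−1} = 1, the joint distribution of the up-crossing counts is P(L⁺_x = k_x for all 1 ≤ x ≤ M−1) = ∏_{x=2}^{M−1} C(k_x + k_{x−1} − 2, k_x − 1) · p_x^{k_x} · (1−p_x)^{k_{x−1}−1}, where C(n,j) denotes the binomial coefficient. -/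
open scoped BigOperators Topology Classical
open Real MeasureTheory Filter

/-- One-step transition probability of the unzipping walk: from `x` to `x+1` with
probability `p x`, from `x` to `x-1` with probability `1 - p x`. -/
def stepProb (p : ℕ → ℝ) (x y : ℕ) : ℝ :=
  if y = x + 1 then p x else if y + 1 = x then 1 - p x else 0

/-- Probability of a finite trajectory (list of successive states). -/
def pathProb (p : ℕ → ℝ) : List ℕ → ℝ
  | x :: y :: l => stepProb p x y * pathProb p (y :: l)
  | _ => 1

/-- `upCount x l` = number of jumps from `x` to `x+1` along the trajectory `l`. -/
def upCount (x : ℕ) : List ℕ → ℕ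
  | a :: b :: l => (if a = x ∧ b = x + 1 then 1 else 0) + upCount x (b :: l)
  | _ => 0

/-- `downCount x l` = number of jumps from `x` to `x-1` along the trajectory `l`. -/
def downCount (x : ℕ) : List ℕ → ℕ
  | a :: b :: l => (if a = x ∧ b + 1 = x then 1 else 0) + downCount x (b :: l)
  | _ => 0

/-- A killed trajectory of the unzipping walk: a nearest-neighbour path on `{1,…,M}`
starting at `1`, ending at `M`, whose states before the final one lie in `[1, M)`. -/
def IsPath (M : ℕ) (l : List ℕ) : Prop :=
  l.head? = some 1 ∧ l.getLast? = some M ∧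
  (∀ i, i + 1 < l.length → l.getD (i + 1) 0 = l.getD i 0 + 1 ∨ l.getD (i + 1) 0 + 1 = l.getD i 0) ∧
  (∀ i, i + 1 < l.length → 1 ≤ l.getD i 0 ∧ l.getD i 0 < M)

/-- A trajectory realizing the event "started from `x+1`, the walk hits `M` before `x`":
a nearest-neighbour path starting at `x+1`, ending at `M`, avoiding `x` (and `M`)
before its final state. -/
def IsEscapePath (M x : ℕ) (l : List ℕ) : Prop :=
  l.head? = some (x + 1) ∧ l.getLast? = some M ∧
  (∀ i, i + 1 < l.length → l.getD (i + 1) 0 = l.getD i 0 + 1 ∨ l.getD (i + 1) 0 + 1 = l.getD i 0) ∧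
  (∀ i, i + 1 < l.length → l.getD i 0 ≠ x ∧ l.getD i 0 ≠ M)

/-- `pbar M p x` = probability that the walk started from `x+1` hits `M` before `x`. -/
noncomputable def pbar (M : ℕ) (p : ℕ → ℝ) (x : ℕ) : ℝ :=
  ∑' l : {l : List ℕ // IsEscapePath M x l}, pathProb p l.1

/-!
A path from `1` killed at `M` is determined by its exit words: for each site `x`, the sequence
of directions (`true` = up) in which it successively leaves `x`. Such a family of words comes
from a path from `a` exactly when every word ends with an upward exit and the upward exits from
`y` outnumber the downward exits from `y + 1` by one if `a ≤ y` and by none otherwise; the path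
is rebuilt by reading the words greedily. Prescribing the up-crossings `k` therefore fixes the
letter counts of each word (`k x` ups, `k (x - 1) - 1` downs, last letter up), so the paths of
the event are counted by a product of binomial coefficients, and they all have the same
probability `∏ p x ^ k x * (1 - p x) ^ (k (x - 1) - 1)`.
-/

open Finset

/-- `HitPath M a t`: the trajectory `a :: t` is a nearest-neighbour path in `[1, M]` that stops
at its first visit to `M`. -/
inductive HitPath (M : ℕ) : ℕ → List ℕ → Prop
  | nil : HitPath M M []
  | up {a t} : 1 ≤ a → a < M → HitPath M (a + 1) t → HitPath M a ((a + 1) :: t)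
  | down {a t} : 1 ≤ a → a + 1 < M → HitPath M a t → HitPath M (a + 1) (a :: t)

theorem HitPath.one_le {M a : ℕ} {t : List ℕ} (h : HitPath M a t) (ha : a < M) : 1 ≤ a := by
  cases h <;> omega

def IsPathFrom (M : ℕ) (l : List ℕ) : Prop :=
  l.getLast? = some M ∧
  (∀ i, i + 1 < l.length →
    l.getD (i + 1) 0 = l.getD i 0 + 1 ∨ l.getD (i + 1) 0 + 1 = l.getD i 0) ∧
  (∀ i, i + 1 < l.length → 1 ≤ l.getD i 0 ∧ l.getD i 0 < M)

section IsPathFrom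
variable {M a b : ℕ} {l : List ℕ}

theorem isPathFrom_singleton : IsPathFrom M [a] ↔ a = M := by
  simp [IsPathFrom]

theorem isPathFrom_cons_cons : IsPathFrom M (a :: b :: l) ↔
    (b = a + 1 ∨ b + 1 = a) ∧ (1 ≤ a ∧ a < M) ∧ IsPathFrom M (b :: l) := by
  simp only [IsPathFrom, List.getLast?_cons_cons, List.length_cons]
  rw [← Nat.and_forall_add_one, ← Nat.and_forall_add_one (p := fun i => i + 1 < _ → _)]
  simp
  tauto

end IsPathFrom

theorem hitPath_iff_isPathFrom {M : ℕ} :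
    ∀ {a : ℕ} {t : List ℕ}, HitPath M a t ↔ IsPathFrom M (a :: t)
  | a, [] => by
    rw [isPathFrom_singleton]
    constructor
    · rintro ⟨⟩; rfl
    · rintro rfl; exact .nil
  | a, b :: t => by
    rw [isPathFrom_cons_cons, ← hitPath_iff_isPathFrom]
    constructor
    · rintro (_ | ⟨ha, haM, h⟩ | ⟨ha, haM, h⟩)
      · exact ⟨Or.inl rfl, ⟨ha, haM⟩, h⟩
      · exact ⟨Or.inr rfl, ⟨by omega, by omega⟩, h⟩
    · rintro ⟨rfl | rfl, ⟨ha, haM⟩, h⟩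
      · exact .up ha haM h
      · exact .down (h.one_le (by omega)) haM h

theorem isPath_iff {M : ℕ} {l : List ℕ} :
    IsPath M l ↔ ∃ t, l = 1 :: t ∧ HitPath M 1 t := by
  constructor
  · rintro ⟨hhead, h⟩
    obtain ⟨t, rfl⟩ := List.head?_eq_some_iff.1 hhead
    exact ⟨t, rfl, hitPath_iff_isPathFrom.2 h⟩
  · rintro ⟨t, rfl, h⟩
    exact ⟨rfl, hitPath_iff_isPathFrom.1 h⟩

theorem tsum_isPath_eq_tsum_hitPath {M : ℕ} {Q : List ℕ → Prop} (f : List ℕ → ℝ) :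
    ∑' l : {l // IsPath M l ∧ Q l}, f l =
      ∑' t : {t // HitPath M 1 t ∧ Q (1 :: t)}, f (1 :: t) := by
  let e : {t // HitPath M 1 t ∧ Q (1 :: t)} → {l // IsPath M l ∧ Q l} :=
    fun t => ⟨1 :: t.1, isPath_iff.2 ⟨t.1, rfl, t.2.1⟩, t.2.2⟩
  have he : Function.Bijective e := by
    refine ⟨fun t t' h => Subtype.ext (List.cons_injective (congrArg Subtype.val h)), ?_⟩
    rintro ⟨l, hl, hQ⟩
    obtain ⟨t, rfl, ht⟩ := isPath_iff.1 hl
    exact ⟨⟨t, ht, hQ⟩, rfl⟩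
  exact ((Equiv.ofBijective e he).tsum_eq fun l => f l.1).symm

def exitWord (x : ℕ) : List ℕ → List Bool
  | a :: b :: l => (if a = x then [decide (b = x + 1)] else []) ++ exitWord x (b :: l)
  | _ => []

theorem count_true_exitWord (x : ℕ) : ∀ l : List ℕ, (exitWord x l).count true = upCount x l
  | [] | [_] => rfl
  | a :: b :: l => by
    rw [exitWord, upCount, List.count_append, count_true_exitWord x (b :: l)]
    by_cases ha : a = x <;> by_cases hb : b = x + 1 <;> simp [ha, hb]

theorem exitWord_up (x a : ℕ) (t : List ℕ) :
    exitWord x (a :: (a + 1) :: t) =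
      (if a = x then [true] else []) ++ exitWord x ((a + 1) :: t) := by
  rw [exitWord]; split_ifs with h <;> simp [h]

theorem exitWord_down (x a : ℕ) (t : List ℕ) :
    exitWord x ((a + 1) :: a :: t) =
      (if a + 1 = x then [false] else []) ++ exitWord x (a :: t) := by
  rw [exitWord]; split_ifs with h <;> simp; omega

namespace HitPath

variable {M a : ℕ} {t : List ℕ}

theorem exitWord_eq_nil (h : HitPath M a t) {x : ℕ} (hx : x = 0 ∨ M ≤ x) :
    exitWord x (a :: t) = [] := by
  induction h with
  | nil => rfl
  | up ha haM _ ih => rw [exitWord_up, ih, if_neg (by omega)]; rfl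
  | down ha haM _ ih => rw [exitWord_down, ih, if_neg (by omega)]; rfl

theorem balanced (h : HitPath M a t) {y : ℕ} (hy : y < M) :
    (exitWord y (a :: t)).count true =
      (exitWord (y + 1) (a :: t)).count false + if a ≤ y then 1 else 0 := by
  induction h with
  | nil => simp [exitWord]; omega
  | up ha haM _ ih =>
    rw [exitWord_up, exitWord_up, List.count_append, List.count_append, ih]
    split_ifs <;> simp <;> omega
  | down ha haM _ ih =>
    rw [exitWord_down, exitWord_down, List.count_append, List.count_append, ih]
    split_ifs <;> simp <;> omega

theorem getLast?_exitWord (h : HitPath M a t) {x : ℕ} (hx : exitWord x (a :: t) ≠ []) :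
    (exitWord x (a :: t)).getLast? = some true := by
  induction h with
  | nil => simp [exitWord] at hx
  | @up a t _ _ _ ih =>
    rw [exitWord_up] at hx ⊢
    by_cases hW : exitWord x ((a + 1) :: t) = []
    · rw [hW] at hx ⊢
      split_ifs at hx ⊢ <;> simp_all
    · simp [List.getLast?_append, ih hW]
  | @down a t _ haM h ih =>
    rw [exitWord_down] at hx ⊢
    by_cases hW : exitWord x (a :: t) = []
    · have := h.balanced (y := a + 1) haM
      split_ifs at hx with hxa
      · subst hxa; simp [hW] at this
      · simp [hW] at hx
    · simp [List.getLast?_append, ih hW]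

theorem pathProb_eq (h : HitPath M a t) (p : ℕ → ℝ) :
    pathProb p (a :: t) = ∏ x ∈ range M,
      p x ^ (exitWord x (a :: t)).count true * (1 - p x) ^ (exitWord x (a :: t)).count false := by
  induction h with
  | nil => simp [pathProb, exitWord]
  | @up a t _ haM _ ih =>
    have hstep : pathProb p (a :: (a + 1) :: t) = p a * pathProb p ((a + 1) :: t) := by
      simp [pathProb, stepProb]
    rw [hstep, ih, ← prod_ite_eq_of_mem _ a p (mem_range.2 haM), ← prod_mul_distrib]
    refine prod_congr rfl fun x _ => ?_
    rw [exitWord_up]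
    split_ifs <;> simp [pow_succ]; ring
  | @down a t _ haM _ ih =>
    have hstep : pathProb p ((a + 1) :: a :: t) = (1 - p (a + 1)) * pathProb p (a :: t) := by
      simp [pathProb, stepProb, show a ≠ a + 1 + 1 by omega]
    rw [hstep, ih, ← prod_ite_eq_of_mem _ (a + 1) (fun x => 1 - p x) (mem_range.2 haM),
      ← prod_mul_distrib]
    refine prod_congr rfl fun x _ => ?_
    rw [exitWord_down]
    split_ifs <;> simp [pow_succ]; ring

theorem eq_of_exitWord_eq (h : HitPath M a t) {t' : List ℕ} (h' : HitPath M a t')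
    (hw : ∀ x, exitWord x (a :: t) = exitWord x (a :: t')) : t = t' := by
  induction h generalizing t' with
  | nil => cases h' <;> first | rfl | omega
  | @up a t _ haM _ ih =>
    cases h' with
    | nil => omega
    | up _ _ h' =>
      congr 1
      refine ih h' fun x => ?_
      simpa only [exitWord_up, List.append_cancel_left_eq] using hw x
    | @down b _ _ _ _ =>
      have := hw (b + 1)
      simp [exitWord_up, exitWord_down] at this
  | @down a t _ haM _ ih =>
    cases h' with
    | nil => omega
    | up _ _ _ =>
      have := hw (a + 1)
      simp [exitWord_up, exitWord_down] at this
    | down _ _ h' =>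
      congr 1
      refine ih h' fun x => ?_
      simpa only [exitWord_down, List.append_cancel_left_eq] using hw x

end HitPath

structure IsExitWordFamily (M a : ℕ) (w : ℕ → List Bool) : Prop where
  eq_nil : ∀ x, x = 0 ∨ M ≤ x → w x = []
  balanced : ∀ y < M, (w y).count true = (w (y + 1)).count false + if a ≤ y then 1 else 0
  getLast? : ∀ x, w x ≠ [] → (w x).getLast? = some true

theorem HitPath.isExitWordFamily {M a : ℕ} {t : List ℕ} (h : HitPath M a t) :
    IsExitWordFamily M a (exitWord · (a :: t)) :=
  ⟨fun _ hx => h.exitWord_eq_nil hx, fun _ hy => h.balanced hy,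
    fun _ hx => h.getLast?_exitWord hx⟩

namespace IsExitWordFamily

open Function

variable {M a x : ℕ} {w : ℕ → List Bool} {c : Bool} {tl : List Bool}

theorem eq_nil_of_count_true_eq_zero (hw : IsExitWordFamily M a w) (h : (w x).count true = 0) :
    w x = [] := by
  by_contra hne
  have := List.count_pos_iff.2 (List.mem_of_getLast? (hw.getLast? x hne))
  omega

theorem eq_nil_of_top (hw : IsExitWordFamily M M w) (x : ℕ) : w x = [] := by
  suffices ∀ j, w (M - j) = [] by
    rcases le_or_gt M x with hx | hx
    · exact hw.eq_nil x (Or.inr hx)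
    · simpa [Nat.sub_sub_self hx.le] using this (M - x)
  intro j
  induction j with
  | zero => exact hw.eq_nil M (Or.inr le_rfl)
  | succ j ih =>
    rcases Nat.eq_zero_or_pos (M - (j + 1)) with h0 | hpos
    · exact hw.eq_nil _ (Or.inl h0)
    · refine hw.eq_nil_of_count_true_eq_zero ?_
      have := hw.balanced (M - (j + 1)) (by omega)
      rw [show M - (j + 1) + 1 = M - j by omega, ih, if_neg (by omega)] at this
      simpa using this

theorem update_tail (hw : IsExitWordFamily M a w) (hx : w x = c :: tl) {a' : ℕ}
    (hbal : ∀ y < M, (update w x tl y).count true =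
      (update w x tl (y + 1)).count false + if a' ≤ y then 1 else 0) :
    IsExitWordFamily M a' (update w x tl) where
  eq_nil y hy := by
    have : y ≠ x := by rintro rfl; simp [hw.eq_nil y hy] at hx
    rw [update_of_ne this, hw.eq_nil y hy]
  balanced := hbal
  getLast? y hy := by
    rcases eq_or_ne y x with rfl | hyx
    · rw [update_self] at hy ⊢
      simpa [hx, List.getLast?_cons, List.getLast?_eq_some_getLast hy] using hw.getLast? y
    · rw [update_of_ne hyx] at hy ⊢
      exact hw.getLast? y hy

theorem update_up (hw : IsExitWordFamily M a w) (hwa : w a = true :: tl) :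
    IsExitWordFamily M (a + 1) (update w a tl) :=
  hw.update_tail hwa fun y hy => by
    have := hw.balanced y hy
    simp only [update_apply]
    split_ifs at this ⊢ <;> subst_vars <;> simp_all <;> omega

theorem update_down (hw : IsExitWordFamily M (a + 1) w) (hwa : w (a + 1) = false :: tl) :
    IsExitWordFamily M a (update w (a + 1) tl) :=
  hw.update_tail hwa fun y hy => by
    have := hw.balanced y hy
    simp only [update_apply]
    split_ifs at this ⊢ <;> subst_vars <;> simp_all <;> omega

theorem sum_length_update_lt (hx : w x = c :: tl) (hxM : x < M) :
    ∑ y ∈ range M, (update w x tl y).length < ∑ y ∈ range M, (w y).length := by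
  refine sum_lt_sum (fun y _ => ?_) ⟨x, mem_range.2 hxM, by simp [hx]⟩
  rcases eq_or_ne y x with rfl | hyx
  · simp [hx]
  · rw [update_of_ne hyx]

theorem exists_hitPath {a : ℕ} {w : ℕ → List Bool} (hw : IsExitWordFamily M a w)
    (ha : 1 ≤ a) (haM : a ≤ M) :
    ∃ t, HitPath M a t ∧ ∀ x, exitWord x (a :: t) = w x := by
  rcases haM.eq_or_lt with rfl | haM
  · exact ⟨[], .nil, fun x => by rw [hw.eq_nil_of_top x]; rfl⟩
  have hne : w a ≠ [] := fun h => by simpa [h] using hw.balanced a haM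
  obtain ⟨c, tl, hwa⟩ := List.exists_cons_of_ne_nil hne
  cases c with
  | true =>
    obtain ⟨t, ht, hwt⟩ := exists_hitPath (hw.update_up hwa) (by omega) haM
    refine ⟨(a + 1) :: t, .up ha haM ht, fun x => ?_⟩
    rw [exitWord_up, hwt]
    rcases eq_or_ne x a with rfl | hx
    · simp [hwa]
    · simp [hx, Ne.symm hx]
  | false =>
    obtain ⟨b, rfl⟩ : ∃ b, a = b + 1 := ⟨a - 1, by omega⟩
    have hb : 1 ≤ b := by
      by_contra hb
      obtain rfl : b = 0 := by omega
      simpa [hw.eq_nil 0 (Or.inl rfl), hwa] using hw.balanced 0 (by omega)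
    obtain ⟨t, ht, hwt⟩ := exists_hitPath (hw.update_down hwa) hb (by omega)
    refine ⟨b :: t, .down hb haM ht, fun x => ?_⟩
    rw [exitWord_down, hwt]
    rcases eq_or_ne x (b + 1) with rfl | hx
    · simp [hwa]
    · simp [hx, Ne.symm hx]
termination_by ∑ y ∈ range M, (w y).length
decreasing_by all_goals exact sum_length_update_lt hwa (by omega)

end IsExitWordFamily

def boolWords (a b : ℕ) : Set (List Bool) := {u | u.count true = a ∧ u.count false = b}

section boolWords
variable {a b : ℕ}

theorem length_of_mem_boolWords {u : List Bool} (hu : u ∈ boolWords a b) : u.length = a + b := by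
  rw [← List.count_true_add_count_false, hu.1, hu.2]

theorem finite_boolWords : (boolWords a b).Finite :=
  (List.finite_length_eq Bool (a + b)).subset fun _ => length_of_mem_boolWords

theorem eq_replicate_count_of_count_not_eq_zero {c : Bool} {u : List Bool}
    (h : u.count (!c) = 0) : u = List.replicate (u.count c) c := by
  have := List.count_not_add_count u c
  exact List.eq_replicate_iff.2 ⟨by omega, fun d hd => (List.count_eq_length.1 (by omega) d hd).symm⟩

theorem boolWords_zero_left : boolWords 0 b = {List.replicate b false} := by
  ext u
  constructor
  · rintro ⟨ht, rfl⟩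
    exact eq_replicate_count_of_count_not_eq_zero ht
  · rintro rfl
    simp [boolWords, List.count_replicate]

theorem boolWords_zero_right : boolWords a 0 = {List.replicate a true} := by
  ext u
  constructor
  · rintro ⟨rfl, hf⟩
    exact eq_replicate_count_of_count_not_eq_zero hf
  · rintro rfl
    simp [boolWords, List.count_replicate]

theorem boolWords_succ_succ : boolWords (a + 1) (b + 1) =
    List.cons true '' boolWords a (b + 1) ∪ List.cons false '' boolWords (a + 1) b := by
  ext (_ | ⟨_ | _, u⟩) <;> simp [boolWords]

theorem ncard_boolWords (a b : ℕ) : (boolWords a b).ncard = (a + b).choose a := by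
  induction a generalizing b with
  | zero => simp [boolWords_zero_left]
  | succ a iha =>
    induction b with
    | zero => simp [boolWords_zero_right]
    | succ b ihb =>
      have hdisj : Disjoint (List.cons true '' boolWords a (b + 1))
          (List.cons false '' boolWords (a + 1) b) :=
        Set.disjoint_left.2 fun _ ⟨_, _, hu⟩ ⟨_, _, hv⟩ => by simp [← hu] at hv
      rw [boolWords_succ_succ, Set.ncard_union_eq hdisj (finite_boolWords.image _)
        (finite_boolWords.image _), Set.ncard_image_of_injective _ List.cons_injective,
        Set.ncard_image_of_injective _ List.cons_injective, iha, ihb,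
        show a + 1 + (b + 1) = a + (b + 1) + 1 by omega, Nat.choose_succ_succ',
        show a + 1 + b = a + (b + 1) by omega]

end boolWords

def lastTrueWords (a b : ℕ) : Set (List Bool) := {u ∈ boolWords a b | u.getLast? = some true}

theorem lastTrueWords_succ_left (a b : ℕ) :
    lastTrueWords (a + 1) b = (· ++ [true]) '' boolWords a b := by
  ext u
  constructor
  · rintro ⟨⟨ht, hf⟩, hu⟩
    rw [← List.dropLast_append_getLast? true hu] at ht hf
    simp only [List.count_append] at ht hf
    exact ⟨u.dropLast, ⟨by simpa using ht, by simpa using hf⟩,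
      List.dropLast_append_getLast? true hu⟩
  · rintro ⟨v, ⟨ht, hf⟩, rfl⟩
    simp [lastTrueWords, boolWords, List.count_append, ht, hf]

theorem ncard_lastTrueWords_succ_left (a b : ℕ) :
    (lastTrueWords (a + 1) b).ncard = (a + b).choose a := by
  rw [lastTrueWords_succ_left, Set.ncard_image_of_injective _ (List.append_left_injective _),
    ncard_boolWords]

/-- A path from `1` crosses the edge `{x - 1, x}` upwards `k (x - 1)` times (none for `x = 1`)
and ends above it, so it steps down from `x` one time fewer. -/
def forcedDownCount (k : ℕ → ℕ) (x : ℕ) : ℕ := if x = 1 then 0 else k (x - 1) - 1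

section UpCounts

variable {M : ℕ} {k : ℕ → ℕ} {w : ℕ → List Bool}

theorem IsExitWordFamily.count_false_eq (hw : IsExitWordFamily M 1 w)
    (hup : ∀ x, 1 ≤ x → x ≤ M - 1 → (w x).count true = k x) {x : ℕ} (hx1 : 1 ≤ x)
    (hxM : x ≤ M - 1) :
    (w x).count false = forcedDownCount k x := by
  rcases eq_or_ne x 1 with rfl | hx
  · simpa [forcedDownCount, hw.eq_nil 0 (Or.inl rfl)] using (hw.balanced 0 (by omega)).symm
  · have := hw.balanced (x - 1) (by omega)
    rw [Nat.sub_add_cancel hx1, if_pos (by omega), hup (x - 1) (by omega) (by omega)] at this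
    rw [forcedDownCount, if_neg hx]
    omega

theorem isExitWordFamily_of_mem_lastTrueWords (hM : 2 ≤ M)
    (hk : ∀ x, 1 ≤ x → x ≤ M - 1 → 1 ≤ k x) (hkM : k (M - 1) = 1)
    (hw0 : ∀ x, x = 0 ∨ M ≤ x → w x = [])
    (hw : ∀ x, 1 ≤ x → x ≤ M - 1 → w x ∈ lastTrueWords (k x) (forcedDownCount k x)) :
    IsExitWordFamily M 1 w where
  eq_nil := hw0
  balanced y hy := by
    rcases Nat.eq_zero_or_pos y with rfl | (hy0 : 1 ≤ y)
    · simp [hw0 0 (Or.inl rfl), (hw 1 le_rfl (by omega)).1.2, forcedDownCount]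
    rcases eq_or_lt_of_le (show y ≤ M - 1 by omega) with rfl | hyM
    · rw [(hw _ hy0 le_rfl).1.1, hkM, hw0 (M - 1 + 1) (Or.inr (by omega)), if_pos hy0]
      rfl
    · rw [(hw y hy0 hyM.le).1.1, (hw (y + 1) (by omega) (by omega)).1.2, forcedDownCount,
        if_neg (by omega), if_pos hy0, Nat.add_sub_cancel]
      have := hk y hy0 hyM.le
      omega
  getLast? x hx := by
    by_cases hx' : 1 ≤ x ∧ x ≤ M - 1
    · exact (hw x hx'.1 hx'.2).2
    · exact absurd (hw0 x (by omega)) hx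

theorem HitPath.exitWord_mem_lastTrueWords {t : List ℕ} (h : HitPath M 1 t)
    (hk : ∀ x, 1 ≤ x → x ≤ M - 1 → 1 ≤ k x)
    (hup : ∀ x, 1 ≤ x → x ≤ M - 1 → upCount x (1 :: t) = k x) {x : ℕ} (hx1 : 1 ≤ x)
    (hxM : x ≤ M - 1) : exitWord x (1 :: t) ∈ lastTrueWords (k x) (forcedDownCount k x) := by
  have hcount : ∀ x, 1 ≤ x → x ≤ M - 1 → (exitWord x (1 :: t)).count true = k x :=
    fun x h1 h2 => (count_true_exitWord x _).trans (hup x h1 h2)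
  refine ⟨⟨hcount x hx1 hxM, h.isExitWordFamily.count_false_eq hcount hx1 hxM⟩,
    h.getLast?_exitWord fun hnil => ?_⟩
  have := hk x hx1 hxM
  simp [← hcount x hx1 hxM, hnil] at this

theorem card_hitPath_upCount_eq (hM : 2 ≤ M) (hk : ∀ x, 1 ≤ x → x ≤ M - 1 → 1 ≤ k x)
    (hkM : k (M - 1) = 1) :
    Nat.card {t // HitPath M 1 t ∧ ∀ x, 1 ≤ x → x ≤ M - 1 → upCount x (1 :: t) = k x} =
      ∏ x ∈ Icc 1 (M - 1), (k x - 1 + forcedDownCount k x).choose (k x - 1) := by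
  let Φ : {t // HitPath M 1 t ∧ ∀ x, 1 ≤ x → x ≤ M - 1 → upCount x (1 :: t) = k x} →
      ∀ x : Icc 1 (M - 1), lastTrueWords (k x) (forcedDownCount k x) := fun t x =>
    ⟨exitWord x (1 :: t.1),
      t.2.1.exitWord_mem_lastTrueWords hk t.2.2 (mem_Icc.1 x.2).1 (mem_Icc.1 x.2).2⟩
  have hΦ : Function.Bijective Φ := by
    constructor
    · rintro ⟨t, ht, _⟩ ⟨t', ht', _⟩ h
      refine Subtype.ext (ht.eq_of_exitWord_eq ht' fun x => ?_)
      by_cases hx : x ∈ Icc 1 (M - 1)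
      · exact congrArg Subtype.val (congrFun h ⟨x, hx⟩)
      · rw [mem_Icc] at hx
        rw [ht.exitWord_eq_nil (by omega), ht'.exitWord_eq_nil (by omega)]
    · intro v
      let w : ℕ → List Bool := fun x =>
        if hx : x ∈ Icc 1 (M - 1) then (v ⟨x, hx⟩).1 else []
      have hw : IsExitWordFamily M 1 w :=
        isExitWordFamily_of_mem_lastTrueWords hM hk hkM
          (fun x hx => dif_neg (by rw [mem_Icc]; omega))
          (fun x h1 h2 => by simp only [w, dif_pos (mem_Icc.2 ⟨h1, h2⟩)]; exact (v _).2)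
      obtain ⟨t, ht, htw⟩ := hw.exists_hitPath le_rfl (by omega)
      refine ⟨⟨t, ht, fun x h1 h2 => ?_⟩, funext fun x => Subtype.ext ?_⟩
      · rw [← count_true_exitWord, htw]
        simp only [w, dif_pos (mem_Icc.2 ⟨h1, h2⟩)]
        exact (v _).2.1.1
      · simp only [Φ, htw, w, dif_pos x.2]
  rw [Nat.card_eq_of_bijective Φ hΦ, Nat.card_pi,
    prod_coe_sort (Icc 1 (M - 1)) fun x => Nat.card (lastTrueWords (k x) (forcedDownCount k x))]
  refine prod_congr rfl fun x hx => ?_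
  rw [Nat.card_coe_set_eq, ← ncard_lastTrueWords_succ_left,
    Nat.sub_add_cancel (hk x (mem_Icc.1 hx).1 (mem_Icc.1 hx).2)]

theorem HitPath.pathProb_eq_of_upCount {t : List ℕ} (h : HitPath M 1 t) (p : ℕ → ℝ)
    (hup : ∀ x, 1 ≤ x → x ≤ M - 1 → upCount x (1 :: t) = k x) :
    pathProb p (1 :: t) = ∏ x ∈ Icc 1 (M - 1), p x ^ k x * (1 - p x) ^ forcedDownCount k x := by
  have hcount : ∀ x, 1 ≤ x → x ≤ M - 1 → (exitWord x (1 :: t)).count true = k x :=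
    fun x h1 h2 => (count_true_exitWord x _).trans (hup x h1 h2)
  rw [h.pathProb_eq, ← prod_subset (s₁ := Icc 1 (M - 1)) (fun x hx => by simp at hx ⊢; omega)]
  · refine prod_congr rfl fun x hx => ?_
    rw [mem_Icc] at hx
    rw [hcount x hx.1 hx.2, h.isExitWordFamily.count_false_eq hcount hx.1 hx.2]
  · intro x hx hx'
    simp only [mem_range, mem_Icc] at hx hx'
    simp [h.exitWord_eq_nil (x := x) (by omega)]

end UpCounts

theorem stmt_0_general (M : ℕ) (hM : 3 ≤ M) (p : ℕ → ℝ) (hp1 : p 1 = 1)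
    (k : ℕ → ℕ) (hk : ∀ x, 1 ≤ x → x ≤ M - 1 → 1 ≤ k x) (hkM : k (M - 1) = 1) :
    (∑' l : {l : List ℕ // IsPath M l ∧ ∀ x, 1 ≤ x → x ≤ M - 1 → upCount x l = k x},
        pathProb p l.1)
      = ∏ x ∈ Finset.Icc 2 (M - 1),
          (((k x + k (x - 1) - 2).choose (k x - 1) : ℝ) * p x ^ (k x)
            * (1 - p x) ^ (k (x - 1) - 1)) := by
  rw [tsum_isPath_eq_tsum_hitPath (pathProb p),
    tsum_congr fun t => t.2.1.pathProb_eq_of_upCount p t.2.2, tsum_const,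
    card_hitPath_upCount_eq (by omega) hk hkM, nsmul_eq_mul, Nat.cast_prod, ← prod_mul_distrib,
    ← insert_Icc_add_one_left_eq_Icc (show 1 ≤ M - 1 by omega), prod_insert (by simp)]
  rw [forcedDownCount, if_pos rfl, hp1, Nat.add_zero, Nat.choose_self]
  simp only [Nat.cast_one, one_pow, pow_zero, mul_one, one_mul]
  refine prod_congr rfl fun x hx => ?_
  rw [mem_Icc] at hx
  have := hk x (by omega) hx.2
  have := hk (x - 1) (by omega) (by omega)
  rw [forcedDownCount, if_neg (by omega), mul_assoc,
    show k x - 1 + (k (x - 1) - 1) = k x + k (x - 1) - 2 by omega]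

/-- Joint distribution of the up-crossing counts of the unzipping walk:
for any vector of positive integers `k` with `k (M-1) = 1`,
`P(L⁺_x = k x for all 1 ≤ x ≤ M-1)
  = ∏_{x=2}^{M-1} C(k x + k (x-1) - 2, k x - 1) · (p x)^(k x) · (1 - p x)^(k (x-1) - 1)`. -/
theorem stmt_0 (M : ℕ) (hM : 3 ≤ M) (p : ℕ → ℝ) (hp1 : p 1 = 1)
    (hp : ∀ x, 2 ≤ x → x ≤ M - 1 → 0 < p x ∧ p x < 1)
    (k : ℕ → ℕ) (hk : ∀ x, 1 ≤ x → x ≤ M - 1 → 1 ≤ k x) (hkM : k (M - 1) = 1) :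
    (∑' l : {l : List ℕ // IsPath M l ∧ ∀ x, 1 ≤ x → x ≤ M - 1 → upCount x l = k x},
        pathProb p l.1)
      = ∏ x ∈ Finset.Icc 2 (M - 1),
          (((k x + k (x - 1) - 2).choose (k x - 1) : ℝ) * p x ^ (k x)
            * (1 - p x) ^ (k (x - 1) - 1)) :=
  stmt_0_general M hM p hp1 k hk hkM
end

section
/- Consider the continuous-time unzipping process in environment b: given the sequence b, the jump chain is the unzipping walk with p_x = (1+exp(β(g_0(b_x,b_{x+1}) − g_1)))^{−1} for 2 ≤ x ≤ M−1 and p_1 = 1, and conditionally on the jump chain, the holding times of successive visits are independent exponential random variables, with rate r·(e^{−β g_0(b_x,b_{x+1})} + e^{−β g_1}) for a visit to a site x ∈ {2,…,M−1} and rate r·e^{−β g_0(b_1,b_2)} for a visit to site 1. Let S_x be the total time spent at site x before the jump chain first hits M. Then for every 2 ≤ x ≤ M−1, E[S_x] = e^{β g_0(b_x,b_{x+1})}/(r · p̄_x), where p̄_x is the probability that the jump chain started from x+1 hits M before hitting x. -/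
open scoped BigOperators Topology Classical
open Real MeasureTheory Filter

/-- The four-letter alphabet of DNA bases. -/
inductive Base : Type
  | A | T | C | G
  deriving DecidableEq

instance : Fintype Base where
  elems := {Base.A, Base.T, Base.C, Base.G}
  complete := fun x => by cases x <;> simp

/-- Up-transition probabilities of the unzipping walk in environment `c`:
`p 1 = 1` and `p x = (1 + exp(β (g₀(c_x, c_{x+1}) - g₁)))⁻¹` for `2 ≤ x ≤ M-1`. -/
noncomputable def envp (M : ℕ) (β g1 : ℝ) (g0 : Base → Base → ℝ) (c : ℕ → Base) : ℕ → ℝ :=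
  fun x => if x = 1 then 1
    else if 2 ≤ x ∧ x ≤ M - 1 then (1 + Real.exp (β * (g0 (c x) (c (x + 1)) - g1)))⁻¹
    else 0

/-- Holding rates of the continuous-time unzipping process in environment `b`:
rate `r e^{-β g₀(b_1,b_2)}` at site `1` and `r (e^{-β g₀(b_y,b_{y+1})} + e^{-β g₁})`
at a site `y ∈ {2,…,M-1}`. -/
noncomputable def rateFun (r β g1 : ℝ) (g0 : Base → Base → ℝ) (b : ℕ → Base) : ℕ → ℝ :=
  fun y => if y = 1 then r * Real.exp (-(β * g0 (b 1) (b 2)))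
    else r * (Real.exp (-(β * g0 (b y) (b (y + 1)))) + Real.exp (-(β * g1)))

/-!
The occupation time of `x` adds up one exponential holding time of rate `c x` per visit to `x`,
so its mean is `E[#visits] / c x`. Cutting a trajectory `l₁ ++ x :: l₂` at a visit to `x`
factors its weight; cutting at an arbitrary, at the first and at the last visit gives
`E[#visits] = A B`, `1 = F B` and `1 = A E`, where `A` (resp. `F`) sums the weights of the paths
from `1` to `x` (resp. first-passage paths) and `B` (resp. `E`) those of the paths from `x` to `M`
(resp. not returning to `x`). The sets summed in `F` and `B` are prefix-free, so `F, B ≤ 1` by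
Kraft's inequality, whence `B = 1` and `E[#visits] = A = E⁻¹`. Finally `E = p x * pbar`, since a
path from `x` to `M` avoiding `x` afterwards must first step up.
-/

open scoped ENNReal

namespace List

variable {α : Type*}

theorem existsUnique_append_cons_notMem_left {x : α} {l : List α} (h : x ∈ l) :
    ∃! z : List α × List α, l = z.1 ++ x :: z.2 ∧ x ∉ z.1 := by
  induction l with
  | nil => simp at h
  | cons y l ih =>
    by_cases hxy : x = y
    · subst hxy
      refine ⟨([], l), by simp, ?_⟩
      rintro ⟨_ | ⟨a, s⟩, t⟩ ⟨hl, hs⟩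
      · simpa using hl.symm
      · simp only [cons_append, cons.injEq] at hl
        exact absurd (hl.1 ▸ mem_cons_self) hs
    · obtain ⟨⟨s, t⟩, ⟨hl, hs⟩, huniq⟩ := ih (by simpa [hxy] using h)
      refine ⟨(y :: s, t), ⟨by simp [hl], by simp_all⟩, ?_⟩
      rintro ⟨_ | ⟨a, s'⟩, t'⟩ ⟨hl', hs'⟩
      · simp only [nil_append, cons.injEq] at hl'
        exact absurd hl'.1.symm hxy
      · simp only [cons_append, cons.injEq] at hl'
        have := huniq (s', t') ⟨hl'.2, fun h => hs' (mem_cons_of_mem _ h)⟩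
        simp_all

theorem existsUnique_append_cons_notMem_right {x : α} {l : List α}
    (h : x ∈ l) : ∃! z : List α × List α, l = z.1 ++ x :: z.2 ∧ x ∉ z.2 := by
  obtain ⟨⟨s, t⟩, ⟨hl, hs⟩, huniq⟩ := existsUnique_append_cons_notMem_left (mem_reverse.2 h)
  refine ⟨(t.reverse, s.reverse), ⟨?_, by simpa using hs⟩, ?_⟩
  · simpa using congrArg reverse hl
  rintro ⟨s', t'⟩ ⟨hl', ht'⟩
  have := huniq (t'.reverse, s'.reverse) ⟨by simp [hl'], by simpa using ht'⟩
  simp only [Prod.mk.injEq] at this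
  simp [← this.1, ← this.2]

theorem eq_of_prefix_of_getLast? {c : α} {l₁ l₂ : List α} (h₁ : l₁.getLast? = some c)
    (h₂ : c ∉ l₂.dropLast) (h : l₁ <+: l₂) : l₁ = l₂ := by
  obtain ⟨t, rfl⟩ := h
  rcases eq_or_ne t [] with rfl | ht
  · simp
  · rw [dropLast_append_of_ne_nil ht] at h₂
    exact absurd (mem_append_left _ (mem_of_getLast? h₁)) h₂

theorem take_append_cons_drop {d x : α} {l : List α} {i : ℕ} (hi : i < l.length)
    (hx : l.getD i d = x) : l.take i ++ x :: l.drop (i + 1) = l := by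
  rw [getD_eq_getElem _ _ hi] at hx
  rw [← hx, ← drop_eq_getElem_cons, take_append_drop]

end List

section TsumSplit

variable {α : Type*}

protected theorem ENNReal.tsum_mul_tsum {β γ : Type*} (f : β → ℝ≥0∞) (g : γ → ℝ≥0∞) :
    (∑' b, f b) * (∑' c, g c) = ∑' z : β × γ, f z.1 * g z.2 := by
  simp_rw [ENNReal.tsum_prod', ENNReal.tsum_mul_left, ENNReal.tsum_mul_right]

theorem tsum_eq_tsum_append_cons {S : Set (List α)} {x : α} (D : List α → List α → Prop)
    (h : ∀ w ∈ S, ∃! z : List α × List α, w = z.1 ++ x :: z.2 ∧ D z.1 z.2)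
    (f : List α → ℝ≥0∞) :
    ∑' w : S, f w
      = ∑' z : {z : List α × List α // z.1 ++ x :: z.2 ∈ S ∧ D z.1 z.2},
          f (z.1.1 ++ x :: z.1.2) := by
  let e : {z : List α × List α // z.1 ++ x :: z.2 ∈ S ∧ D z.1 z.2} → S :=
    fun z => ⟨z.1.1 ++ x :: z.1.2, z.2.1⟩
  have he : e.Bijective := by
    constructor
    · rintro ⟨z, hz, hD⟩ ⟨z', hz', hD'⟩ hzz'
      exact Subtype.ext ((h _ hz).unique ⟨rfl, hD⟩ ⟨congrArg Subtype.val hzz', hD'⟩)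
    · rintro ⟨w, hw⟩
      obtain ⟨z, ⟨rfl, hD⟩, -⟩ := h w hw
      exact ⟨⟨z, hw, hD⟩, rfl⟩
  exact ((Equiv.ofBijective e he).tsum_eq (fun w : S => f w)).symm

theorem tsum_append_cons_eq_mul {x : α} {R : List α → List α → Prop} {U V : List α → Prop}
    (hR : ∀ l₁ l₂, R l₁ l₂ ↔ U l₁ ∧ V l₂) {f : List α → ℝ≥0∞}
    (hf : ∀ l₁ l₂, f (l₁ ++ x :: l₂) = f (l₁ ++ [x]) * f (x :: l₂)) :
    ∑' z : {z : List α × List α // R z.1 z.2}, f (z.1.1 ++ x :: z.1.2)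
      = (∑' l : {l // U l}, f (l ++ [x])) * (∑' l : {l // V l}, f (x :: l)) := by
  let e := (Equiv.subtypeEquivRight fun z : List α × List α => hR z.1 z.2).trans
    Equiv.subtypeProdEquivProd
  rw [ENNReal.tsum_mul_tsum, ← e.tsum_eq]
  exact tsum_congr fun z => hf _ _

theorem tsum_sum_visits_eq_tsum_append_cons [DecidableEq α] (S : Set (List α)) (x d : α)
    (f : List α → ℝ≥0∞) :
    ∑' w : S, ∑ i ∈ Finset.range (w.1.length - 1), (if w.1.getD i d = x then f w else 0)
      = ∑' z : {z : List α × List α // z.1 ++ x :: z.2 ∈ S ∧ z.2 ≠ []},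
          f (z.1.1 ++ x :: z.1.2) := by
  let visits := fun w : S => (Finset.range (w.1.length - 1)).filter (fun i => w.1.getD i d = x)
  let e : {z : List α × List α // z.1 ++ x :: z.2 ∈ S ∧ z.2 ≠ []} ≃ Σ w : S, visits w :=
    { toFun := fun z => ⟨⟨_, z.2.1⟩, z.1.1.length, by
        obtain ⟨⟨l₁, l₂⟩, -, hl₂⟩ := z
        refine Finset.mem_filter.2 ⟨Finset.mem_range.2 ?_, by simp⟩
        have : 0 < l₂.length := List.length_pos_of_ne_nil hl₂
        simp only [List.length_append, List.length_cons]
        omega⟩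
      invFun := fun s => ⟨(s.1.1.take s.2.1, s.1.1.drop (s.2.1 + 1)), by
        obtain ⟨⟨w, hw⟩, i, hi⟩ := s
        simp only [visits, Finset.mem_filter, Finset.mem_range] at hi
        refine ⟨by rwa [List.take_append_cons_drop (by omega) hi.2], ?_⟩
        simp only [ne_eq, List.drop_eq_nil_iff]
        omega⟩
      left_inv := by
        rintro ⟨⟨l₁, l₂⟩, h⟩
        simp
      right_inv := by
        rintro ⟨⟨w, hw⟩, i, hi⟩
        simp only [visits, Finset.mem_filter, Finset.mem_range] at hi
        refine Sigma.subtype_ext (Subtype.ext ?_) ?_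
        · exact List.take_append_cons_drop (l := w) (i := i) (by omega) hi.2
        · show (w.take i).length = i
          simp only [List.length_take]
          omega }
  refine Eq.trans ?_ (e.tsum_eq fun s => f s.1).symm
  rw [ENNReal.tsum_sigma']
  refine tsum_congr fun w => ?_
  rw [Finset.tsum_subtype (visits w) (fun _ => f w), Finset.sum_filter]

end TsumSplit

section Walks

open List

def IsStep (a b : ℕ) : Prop := b = a + 1 ∨ b + 1 = a

def IsWalk (K : ℕ → Prop) (a c : ℕ) (l : List ℕ) : Prop :=
  l.head? = some a ∧ l.getLast? = some c ∧ l.IsChain IsStep ∧ ∀ y ∈ l.dropLast, K y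

theorem isWalk_append_cons_iff {K : ℕ → Prop} {a c x : ℕ} {l₁ l₂ : List ℕ} :
    IsWalk K a c (l₁ ++ x :: l₂) ↔ IsWalk K a x (l₁ ++ [x]) ∧ IsWalk K x c (x :: l₂) := by
  simp only [IsWalk]
  rw [isChain_split, dropLast_append_of_ne_nil (cons_ne_nil x l₂), dropLast_concat]
  simp only [head?_append, head?_cons, getLast?_append, getLast?_cons, mem_append, or_imp,
    forall_and, Option.some_or, Option.or_some]
  tauto

theorem mem_of_isChain_isStep {l : List ℕ} (hl : l.IsChain IsStep) {a b z : ℕ} (ha : a ∈ l)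
    (hb : b ∈ l) (haz : a ≤ z) (hzb : z ≤ b) : z ∈ l := by
  induction l generalizing a b with
  | nil => simp at ha
  | cons y t ih =>
    rcases t with _ | ⟨y', t⟩
    · simp only [mem_singleton] at ha hb ⊢
      omega
    obtain ⟨hstep, htail⟩ := isChain_cons_cons.1 hl
    by_cases hzy : z = y
    · exact hzy ▸ mem_cons_self
    obtain ⟨a', ha', haz'⟩ : ∃ a' ∈ y' :: t, a' ≤ z := by
      rcases mem_cons.1 ha with rfl | ha
      · exact ⟨y', mem_cons_self, by rcases hstep with h | h <;> omega⟩
      · exact ⟨a, ha, haz⟩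
    obtain ⟨b', hb', hzb'⟩ : ∃ b' ∈ y' :: t, z ≤ b' := by
      rcases mem_cons.1 hb with rfl | hb
      · exact ⟨y', mem_cons_self, by rcases hstep with h | h <;> omega⟩
      · exact ⟨b, hb, hzb⟩
    exact mem_cons_of_mem _ (ih htail ha' hb' haz' hzb')

theorem isChain_iff_getD {R : ℕ → ℕ → Prop} {l : List ℕ} :
    (∀ i, i + 1 < l.length → R (l.getD i 0) (l.getD (i + 1) 0)) ↔ l.IsChain R := by
  rw [isChain_iff_getElem]
  refine forall_congr' fun i => ⟨fun h hi => ?_, fun h hi => ?_⟩ <;>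
  simpa [getD_eq_getElem, Nat.lt_of_succ_lt hi, hi] using h hi

theorem forall_getD_iff {Q : ℕ → Prop} {l : List ℕ} :
    (∀ i, i + 1 < l.length → Q (l.getD i 0)) ↔ ∀ y ∈ l.dropLast, Q y := by
  simp only [mem_iff_getElem, length_dropLast, getElem_dropLast, forall_exists_index]
  refine ⟨fun h y i hi hy => ?_, fun h i hi => ?_⟩
  · simpa [getD_eq_getElem, hy, show i < l.length by omega] using h i (by omega)
  · simpa [getD_eq_getElem, show i < l.length by omega] using h _ i (by omega) rfl

theorem isPath_iff_isWalk {M : ℕ} {l : List ℕ} :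
    IsPath M l ↔ IsWalk (fun y => 1 ≤ y ∧ y < M) 1 M l :=
  and_congr Iff.rfl <| and_congr Iff.rfl <| and_congr (isChain_iff_getD (R := IsStep))
    (forall_getD_iff (Q := fun y => 1 ≤ y ∧ y < M))

theorem isEscapePath_iff_isWalk {M x : ℕ} {l : List ℕ} :
    IsEscapePath M x l ↔ IsWalk (fun y => y ≠ x ∧ y ≠ M) (x + 1) M l :=
  and_congr Iff.rfl <| and_congr Iff.rfl <| and_congr (isChain_iff_getD (R := IsStep))
    (forall_getD_iff (Q := fun y => y ≠ x ∧ y ≠ M))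

theorem isPath_append_cons_iff {M x : ℕ} {l₁ l₂ : List ℕ} :
    IsPath M (l₁ ++ x :: l₂) ↔ IsWalk (fun y => 1 ≤ y ∧ y < M) 1 x (l₁ ++ [x]) ∧
      IsWalk (fun y => 1 ≤ y ∧ y < M) x M (x :: l₂) :=
  isPath_iff_isWalk.trans isWalk_append_cons_iff

theorem mem_of_isPath {M x : ℕ} {w : List ℕ} (hw : IsPath M w) (hx : 1 ≤ x) (hxM : x ≤ M) :
    x ∈ w := by
  obtain ⟨hhead, hlast, hchain, -⟩ := isPath_iff_isWalk.1 hw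
  exact mem_of_isChain_isStep hchain (mem_of_mem_head? hhead) (mem_of_getLast? hlast) hx hxM

end Walks

section Escape

open List

variable {M x : ℕ} {l : List ℕ}

theorem isWalk_cons_of_isEscapePath (hx : 1 ≤ x) (hxM : x < M) (h : IsEscapePath M x l) :
    IsWalk (fun y => 1 ≤ y ∧ y < M) x M (x :: l) ∧ x ∉ l := by
  obtain ⟨hhead, hlast, hchain, hK⟩ := isEscapePath_iff_isWalk.1 h
  obtain ⟨t, rfl⟩ : ∃ t, l = (x + 1) :: t := ⟨l.tail, (cons_head?_tail hhead).symm⟩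
  have hxl : x ∉ (x + 1) :: t := by
    intro hmem
    obtain ⟨s, hs⟩ := getLast?_eq_some_iff.1 hlast
    rw [hs, mem_append, mem_singleton] at hmem
    rcases hmem with hmem | rfl
    · exact (hK x (by simpa [hs] using hmem)).1 rfl
    · omega
  refine ⟨⟨rfl, by simpa using hlast, isChain_cons_cons.2 ⟨Or.inl rfl, hchain⟩, ?_⟩, hxl⟩
  rw [dropLast_cons_of_ne_nil (cons_ne_nil _ _)]
  intro y hy
  rcases mem_cons.1 hy with rfl | hy
  · exact ⟨hx, hxM⟩
  refine ⟨?_, ?_⟩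
  · by_contra! hyx
    exact hxl (mem_of_isChain_isStep hchain (dropLast_subset _ hy) mem_cons_self (by omega)
      (by omega))
  · by_contra! hMy
    have hx1 : x + 1 ∈ ((x + 1) :: t).dropLast := by
      rcases t with _ | ⟨b, t⟩
      · simp at hy
      · simp
    exact (hK M (mem_of_isChain_isStep hchain.dropLast hx1 hy (by omega) hMy)).2 rfl

theorem isEscapePath_of_isWalk_cons (hxM : x < M)
    (h : IsWalk (fun y => 1 ≤ y ∧ y < M) x M (x :: l)) (hxl : x ∉ l) : IsEscapePath M x l := by
  obtain ⟨-, hlast, hchain, hK⟩ := h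
  rcases l with _ | ⟨b, t⟩
  · simp only [getLast?_singleton, Option.some.injEq] at hlast
    omega
  obtain ⟨hstep, htail⟩ := isChain_cons_cons.1 hchain
  have hlast' : (b :: t).getLast? = some M := by simpa using hlast
  have hb : b = x + 1 := hstep.resolve_right fun hbx => hxl <|
    mem_of_isChain_isStep htail mem_cons_self (mem_of_getLast? hlast') (by omega) hxM.le
  refine isEscapePath_iff_isWalk.2 ⟨by simp [hb], hlast', htail, fun y hy => ⟨?_, ?_⟩⟩
  · rintro rfl
    exact hxl (dropLast_subset _ hy)
  · have := hK y (by rw [dropLast_cons_of_ne_nil (cons_ne_nil _ _)]; exact mem_cons_of_mem _ hy)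
    omega

theorem isEscapePath_iff (hx : 1 ≤ x) (hxM : x < M) :
    IsEscapePath M x l ↔ IsWalk (fun y => 1 ≤ y ∧ y < M) x M (x :: l) ∧ x ∉ l :=
  ⟨isWalk_cons_of_isEscapePath hx hxM, fun h => isEscapePath_of_isWalk_cons hxM h.1 h.2⟩

end Escape

section PathProb

open List

variable {p : ℕ → ℝ}

theorem stepProb_nonneg (hp : ∀ n, 0 ≤ p n ∧ p n ≤ 1) (a b : ℕ) : 0 ≤ stepProb p a b := by
  unfold stepProb
  split_ifs
  exacts [(hp a).1, by linarith [(hp a).2], le_rfl]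

theorem pathProb_nonneg (hp : ∀ n, 0 ≤ p n ∧ p n ≤ 1) : ∀ l : List ℕ, 0 ≤ pathProb p l
  | [] | [_] => zero_le_one
  | a :: b :: l => mul_nonneg (stepProb_nonneg hp a b) (pathProb_nonneg hp (b :: l))

theorem pathProb_append_cons (l₁ : List ℕ) (x : ℕ) (l₂ : List ℕ) :
    pathProb p (l₁ ++ x :: l₂) = pathProb p (l₁ ++ [x]) * pathProb p (x :: l₂) := by
  induction l₁ using List.twoStepInduction with
  | nil => simp [pathProb]
  | singleton a => simp [pathProb]
  | cons_cons a b l₁ _ ih => simp only [cons_append, pathProb] at ih ⊢; rw [ih, mul_assoc]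

theorem ofReal_pathProb_append_cons (hp : ∀ n, 0 ≤ p n ∧ p n ≤ 1) (l₁ : List ℕ) (x : ℕ)
    (l₂ : List ℕ) : ENNReal.ofReal (pathProb p (l₁ ++ x :: l₂))
      = ENNReal.ofReal (pathProb p (l₁ ++ [x])) * ENNReal.ofReal (pathProb p (x :: l₂)) := by
  rw [pathProb_append_cons, ENNReal.ofReal_mul (pathProb_nonneg hp _)]

theorem pathProb_cons_succ (x : ℕ) (t : List ℕ) :
    pathProb p (x :: (x + 1) :: t) = p x * pathProb p ((x + 1) :: t) := by
  simp [pathProb, stepProb]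

theorem sum_stepProb_le_one (hp : ∀ n, 0 ≤ p n ∧ p n ≤ 1) (a : ℕ) (B : Finset ℕ) :
    ∑ b ∈ B, stepProb p a b ≤ 1 := by
  obtain ⟨hp0, hp1⟩ := hp a
  calc ∑ b ∈ B, stepProb p a b
      ≤ ∑ b ∈ B, ((if b = a + 1 then p a else 0) + (if b = a - 1 then 1 - p a else 0)) :=
        Finset.sum_le_sum fun b _ => by
          unfold stepProb
          split_ifs <;> first | omega | linarith
    _ = (if a + 1 ∈ B then p a else 0) + (if a - 1 ∈ B then 1 - p a else 0) := by
        rw [Finset.sum_add_distrib, Finset.sum_ite_eq', Finset.sum_ite_eq']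
    _ ≤ p a + (1 - p a) := add_le_add (by split_ifs <;> linarith) (by split_ifs <;> linarith)
    _ = 1 := by ring

theorem sum_pathProb_le_stepProb (hp : ∀ n, 0 ≤ p n ∧ p n ≤ 1) {a b : ℕ} {F : Finset (List ℕ)}
    (hF : ∀ l ∈ F, ∃ t, l = a :: b :: t) (htail : ∑ m ∈ F.image tail, pathProb p m ≤ 1) :
    ∑ l ∈ F, pathProb p l ≤ stepProb p a b := by
  calc ∑ l ∈ F, pathProb p l = ∑ l ∈ F, stepProb p a b * pathProb p l.tail :=
        Finset.sum_congr rfl fun l hl => by obtain ⟨t, rfl⟩ := hF l hl; rfl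
    _ = stepProb p a b * ∑ m ∈ F.image tail, pathProb p m := by
        rw [Finset.sum_image fun l₁ h₁ l₂ h₂ h => ?_, Finset.mul_sum]
        obtain ⟨t₁, rfl⟩ := hF l₁ h₁
        obtain ⟨t₂, rfl⟩ := hF l₂ h₂
        simpa using h
    _ ≤ stepProb p a b := mul_le_of_le_one_right (stepProb_nonneg hp a b) htail

theorem sum_pathProb_le_one_of_prefixFree (hp : ∀ n, 0 ≤ p n ∧ p n ≤ 1) (n : ℕ) :
    ∀ (a : ℕ) (F : Finset (List ℕ)), (∀ l ∈ F, l.length ≤ n ∧ l.head? = some a) →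
      (∀ l₁ ∈ F, ∀ l₂ ∈ F, l₁ <+: l₂ → l₁ = l₂) → ∑ l ∈ F, pathProb p l ≤ 1 := by
  induction n with
  | zero =>
    intro a F hF _
    rw [Finset.eq_empty_of_forall_notMem (s := F) fun l hl => by
      obtain ⟨hlen, hhead⟩ := hF l hl
      rcases l with _ | _
      · simp at hhead
      · simp at hlen]
    simp
  | succ n ih =>
    intro a F hF hpf
    by_cases hsing : [a] ∈ F
    · rw [Finset.eq_singleton_iff_unique_mem.2 ⟨hsing, fun l hl => ?_⟩]
      · simp [pathProb]
      obtain ⟨t, rfl⟩ : ∃ t, l = a :: t := ⟨l.tail, (cons_head?_tail (hF l hl).2).symm⟩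
      exact (hpf _ hsing _ hl (prefix_cons_inj a |>.2 nil_prefix)).symm
    have hfiber : ∀ b, ∀ l ∈ F.filter (·.getD 1 0 = b), ∃ t, l = a :: b :: t := by
      intro b l hl
      obtain ⟨hlF, rfl⟩ := Finset.mem_filter.1 hl
      have hhead := (hF l hlF).2
      rcases l with _ | ⟨a', _ | ⟨b, t⟩⟩ <;> simp only [head?_cons, head?_nil,
        Option.some.injEq, reduceCtorEq] at hhead
      · exact absurd (hhead ▸ hlF) hsing
      · exact ⟨t, by simp [hhead]⟩
    calc ∑ l ∈ F, pathProb p l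
        = ∑ b ∈ F.image (·.getD 1 0), ∑ l ∈ F with l.getD 1 0 = b, pathProb p l :=
          (Finset.sum_fiberwise_of_maps_to (fun l hl => Finset.mem_image_of_mem _ hl) _).symm
      _ ≤ ∑ b ∈ F.image (·.getD 1 0), stepProb p a b := Finset.sum_le_sum fun b _ =>
          sum_pathProb_le_stepProb hp (hfiber b) (ih b _ (fun m hm => ?_) fun m₁ hm₁ m₂ hm₂ h => ?_)
      _ ≤ 1 := sum_stepProb_le_one hp a _
    · obtain ⟨l, hl, rfl⟩ := Finset.mem_image.1 hm
      have hlen := (hF l (Finset.mem_filter.1 hl).1).1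
      obtain ⟨t, rfl⟩ := hfiber b l hl
      simpa using hlen
    · obtain ⟨l₁, hl₁, rfl⟩ := Finset.mem_image.1 hm₁
      obtain ⟨l₂, hl₂, rfl⟩ := Finset.mem_image.1 hm₂
      obtain ⟨t₁, rfl⟩ := hfiber b l₁ hl₁
      obtain ⟨t₂, rfl⟩ := hfiber b l₂ hl₂
      simpa using hpf _ (Finset.mem_filter.1 hl₁).1 _ (Finset.mem_filter.1 hl₂).1
        ((prefix_cons_inj a).2 h)

theorem tsum_ofReal_pathProb_le_one (hp : ∀ n, 0 ≤ p n ∧ p n ≤ 1) {ι : Type*}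
    (f : ι → List ℕ) (a : ℕ) (hhead : ∀ i, (f i).head? = some a)
    (hpf : ∀ i j, f i <+: f j → i = j) :
    ∑' i, ENNReal.ofReal (pathProb p (f i)) ≤ 1 := by
  have hinj : f.Injective := fun i j h => hpf i j (h ▸ prefix_refl _)
  rw [ENNReal.tsum_eq_iSup_sum]
  refine iSup_le fun s => ?_
  rw [← ENNReal.ofReal_sum_of_nonneg fun i _ => pathProb_nonneg hp _, ← ENNReal.ofReal_one,
    ← Finset.sum_image fun i _ j _ h => hinj h]
  refine ENNReal.ofReal_le_ofReal
    (sum_pathProb_le_one_of_prefixFree hp ((s.image f).sup length) a _ ?_ ?_)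
  · intro l hl
    obtain ⟨i, -, rfl⟩ := Finset.mem_image.1 hl
    exact ⟨Finset.le_sup (f := length) hl, hhead i⟩
  · intro l₁ hl₁ l₂ hl₂ h
    obtain ⟨i, -, rfl⟩ := Finset.mem_image.1 hl₁
    obtain ⟨j, -, rfl⟩ := Finset.mem_image.1 hl₂
    rw [hpf i j h]

theorem tsum_walk_cons_le_one (hp : ∀ n, 0 ≤ p n ∧ p n ≤ 1) {K : ℕ → Prop} {a c : ℕ}
    (hKc : ¬K c) :
    ∑' l : {l // IsWalk K a c (a :: l)}, ENNReal.ofReal (pathProb p (a :: l)) ≤ 1 := by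
  refine tsum_ofReal_pathProb_le_one hp (fun l : {l // IsWalk K a c (a :: l)} => a :: l.1) a
    (fun _ => rfl) fun l l' h => ?_
  have hc : c ∉ (a :: l'.1).dropLast := fun hc => hKc (l'.2.2.2.2 c hc)
  exact Subtype.ext ((cons_inj_right a).1 (eq_of_prefix_of_getLast? l.2.2.1 hc h))

theorem tsum_walk_concat_le_one (hp : ∀ n, 0 ≤ p n ∧ p n ≤ 1) {K : ℕ → Prop} {a x : ℕ} :
    ∑' l : {l // IsWalk K a x (l ++ [x]) ∧ x ∉ l},
      ENNReal.ofReal (pathProb p (l ++ [x])) ≤ 1 := by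
  refine tsum_ofReal_pathProb_le_one hp
    (fun l : {l // IsWalk K a x (l ++ [x]) ∧ x ∉ l} => l.1 ++ [x]) a (fun l => l.2.1.1)
    fun l l' h => Subtype.ext (append_cancel_right (bs := [x]) ?_)
  exact eq_of_prefix_of_getLast? (c := x) (by simp) (by simpa using l'.2.2) h

end PathProb

section Green

open List

variable {p : ℕ → ℝ} {M x : ℕ}

theorem tsum_walk_cons_notMem_eq (hp : ∀ n, 0 ≤ p n ∧ p n ≤ 1) (hx : 1 ≤ x) (hxM : x < M) :
    ∑' l : {l // IsWalk (fun y => 1 ≤ y ∧ y < M) x M (x :: l) ∧ x ∉ l},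
        ENNReal.ofReal (pathProb p (x :: l))
      = ENNReal.ofReal (p x) * ∑' l : {l // IsEscapePath M x l}, ENNReal.ofReal (pathProb p l) := by
  rw [← ENNReal.tsum_mul_left, ← (Equiv.subtypeEquivRight
    fun l => (isEscapePath_iff hx hxM (l := l)).symm).tsum_eq]
  refine tsum_congr fun l => ?_
  obtain ⟨t, ht⟩ : ∃ t, l.1 = (x + 1) :: t :=
    ⟨l.1.tail, (cons_head?_tail ((isEscapePath_iff hx hxM).2 l.2).1).symm⟩
  simp only [Equiv.subtypeEquivRight_apply_coe, ht, pathProb_cons_succ,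
    ENNReal.ofReal_mul (hp x).1]

theorem tsum_visits_eq_inv (hp : ∀ n, 0 ≤ p n ∧ p n ≤ 1) (hx : 1 ≤ x) (hxM : x < M)
    (htot : ∑' w : {w | IsPath M w}, ENNReal.ofReal (pathProb p w) = 1) :
    ∑' z : {z : List ℕ × List ℕ // z.1 ++ x :: z.2 ∈ {w | IsPath M w} ∧ z.2 ≠ []},
        ENNReal.ofReal (pathProb p (z.1.1 ++ x :: z.1.2))
      = (ENNReal.ofReal (p x) *
          ∑' l : {l // IsEscapePath M x l}, ENNReal.ofReal (pathProb p l))⁻¹ := by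
  set K : ℕ → Prop := fun y => 1 ≤ y ∧ y < M
  set q : List ℕ → ℝ≥0∞ := fun l => ENNReal.ofReal (pathProb p l)
  set A := ∑' l : {l // IsWalk K 1 x (l ++ [x])}, q (l ++ [x])
  set B := ∑' l : {l // IsWalk K x M (x :: l)}, q (x :: l)
  set F := ∑' l : {l // IsWalk K 1 x (l ++ [x]) ∧ x ∉ l}, q (l ++ [x])
  set E := ∑' l : {l // IsWalk K x M (x :: l) ∧ x ∉ l}, q (x :: l)
  have hq : ∀ l₁ l₂, q (l₁ ++ x :: l₂) = q (l₁ ++ [x]) * q (x :: l₂) :=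
    fun l₁ l₂ => ofReal_pathProb_append_cons hp l₁ x l₂
  have hN : ∑' z : {z : List ℕ × List ℕ // z.1 ++ x :: z.2 ∈ {w | IsPath M w} ∧ z.2 ≠ []},
      q (z.1.1 ++ x :: z.1.2) = A * B := by
    refine tsum_append_cons_eq_mul (R := fun l₁ l₂ => IsPath M (l₁ ++ x :: l₂) ∧ l₂ ≠ [])
      (fun l₁ l₂ => ?_) hq
    rw [isPath_append_cons_iff, and_iff_left_iff_imp]
    rintro ⟨-, ⟨-, hl₂, -⟩⟩ rfl
    simp only [getLast?_singleton, Option.some.injEq] at hl₂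
    omega
  have hFB : 1 = F * B := by
    refine htot.symm.trans <| (tsum_eq_tsum_append_cons (fun l₁ _ => x ∉ l₁) (fun w hw =>
      existsUnique_append_cons_notMem_left (mem_of_isPath hw (by omega) hxM.le)) q).trans ?_
    exact tsum_append_cons_eq_mul (R := fun l₁ l₂ => IsPath M (l₁ ++ x :: l₂) ∧ x ∉ l₁)
      (fun l₁ l₂ => by rw [isPath_append_cons_iff]; tauto) hq
  have hAE : 1 = A * E := by
    refine htot.symm.trans <| (tsum_eq_tsum_append_cons (fun _ l₂ => x ∉ l₂) (fun w hw =>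
      existsUnique_append_cons_notMem_right (mem_of_isPath hw (by omega) hxM.le)) q).trans ?_
    exact tsum_append_cons_eq_mul (R := fun l₁ l₂ => IsPath M (l₁ ++ x :: l₂) ∧ x ∉ l₂)
      (fun l₁ l₂ => by rw [isPath_append_cons_iff]; tauto) hq
  have hB : B = 1 := le_antisymm (tsum_walk_cons_le_one hp (by simp [K]))
    (hFB ▸ mul_le_of_le_one_left' (tsum_walk_concat_le_one hp))
  rw [hN, hB, mul_one, ← tsum_walk_cons_notMem_eq hp hx hxM]
  exact ENNReal.eq_inv_of_mul_eq_one_left hAE.symm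

end Green

section Exponential

open Set

variable {Ω : Type*} [MeasurableSpace Ω] {μ : Measure Ω} {c : ℝ}

theorem ae_pos_of_exponential_cdf {T : Ω → ℝ}
    (h : ∀ t : ℝ, 0 ≤ t → μ {ω | T ω ≤ t} = μ univ * ENNReal.ofReal (1 - exp (-(c * t)))) :
    ∀ᵐ ω ∂μ, 0 < T ω := by
  simpa [ae_iff] using h 0 le_rfl

theorem lintegral_ofReal_of_exponential_cdf [IsFiniteMeasure μ] {T : Ω → ℝ} (hT : Measurable T)
    (hc : 0 < c)
    (h : ∀ t : ℝ, 0 ≤ t → μ {ω | T ω ≤ t} = μ univ * ENNReal.ofReal (1 - exp (-(c * t)))) :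
    ∫⁻ ω, ENNReal.ofReal (T ω) ∂μ = μ univ / ENNReal.ofReal c := by
  have htail : ∀ t ∈ Ioi (0 : ℝ), μ {ω | t < T ω} = μ univ * ENNReal.ofReal (exp (-(c * t))) := by
    intro t ht
    have hexp : exp (-(c * t)) ≤ 1 := exp_le_one_iff.2 (by nlinarith [mem_Ioi.1 ht])
    rw [show {ω | t < T ω} = {ω | T ω ≤ t}ᶜ by ext; simp,
      measure_compl (measurableSet_le hT measurable_const) (measure_ne_top _ _),
      h t (le_of_lt ht)]
    nth_rewrite 1 [← mul_one (μ univ)]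
    rw [← ENNReal.mul_sub fun _ _ => measure_ne_top _ _, ← ENNReal.ofReal_one,
      ← ENNReal.ofReal_sub _ (by linarith), sub_sub_cancel]
  rw [lintegral_eq_lintegral_meas_lt μ ((ae_pos_of_exponential_cdf h).mono fun _ => le_of_lt)
    hT.aemeasurable, setLIntegral_congr_fun measurableSet_Ioi htail, lintegral_const_mul' _ _
    (measure_ne_top _ _), ← ofReal_integral_eq_lintegral_ofReal]
  · simp_rw [← neg_mul]
    rw [integral_exp_mul_Ioi (by linarith) 0]
    simp [div_eq_mul_inv, ENNReal.ofReal_inv_of_pos hc]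
  · simp_rw [← neg_mul]
    exact integrableOn_exp_mul_Ioi (by linarith) 0
  · exact Filter.Eventually.of_forall fun _ => (exp_pos _).le

theorem lintegral_ofReal_sum_of_exponential_cdf [IsFiniteMeasure μ] {T : Ω → ℕ → ℝ}
    (hT : ∀ i, Measurable (T · i)) (I : Finset ℕ) (hc : 0 < c)
    (h : ∀ i ∈ I, ∀ t : ℝ, 0 ≤ t →
      μ {ω | T ω i ≤ t} = μ univ * ENNReal.ofReal (1 - exp (-(c * t)))) :
    (∀ᵐ ω ∂μ, 0 ≤ ∑ i ∈ I, T ω i) ∧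
      ∫⁻ ω, ENNReal.ofReal (∑ i ∈ I, T ω i) ∂μ = I.card * (μ univ / ENNReal.ofReal c) := by
  have hpos : ∀ᵐ ω ∂μ, ∀ i ∈ I, 0 ≤ T ω i :=
    (Filter.eventually_all_finset I).2 fun i hi => (ae_pos_of_exponential_cdf (h i hi)).mono
      fun _ => le_of_lt
  refine ⟨hpos.mono fun ω hω => Finset.sum_nonneg hω, ?_⟩
  rw [lintegral_congr_ae (hpos.mono fun ω hω => ENNReal.ofReal_sum_of_nonneg hω),
    lintegral_finsetSum' _ fun i _ => (hT i).ennreal_ofReal.aemeasurable,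
    Finset.sum_congr rfl fun i hi => lintegral_ofReal_of_exponential_cdf (hT i) hc (h i hi)]
  simp

end Exponential

section Fibers

variable {Ω α : Type*} [MeasurableSpace Ω] {μ : Measure Ω} {X : Ω → α} {S : Set α}

theorem restrict_iUnion_fiber (hS : ∀ᵐ ω ∂μ, X ω ∈ S) :
    μ.restrict (⋃ a : S, {ω | X ω = a}) = μ := by
  rw [show ⋃ a : S, {ω | X ω = a} = X ⁻¹' S by ext; simp]
  exact Measure.restrict_eq_self_of_ae_mem hS

theorem lintegral_eq_tsum_fiber [Countable α] (hX : ∀ a, MeasurableSet {ω | X ω = a})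
    (hS : ∀ᵐ ω ∂μ, X ω ∈ S) (f : Ω → ℝ≥0∞) :
    ∫⁻ ω, f ω ∂μ = ∑' a : S, ∫⁻ ω in {ω | X ω = a}, f ω ∂μ := by
  have hdisj : Pairwise (Function.onFun Disjoint fun a : S => {ω | X ω = a}) :=
    fun a b hab => Set.disjoint_left.2 fun ω ha hb => hab (Subtype.ext (ha.symm.trans hb))
  rw [← lintegral_iUnion (fun a : S => hX a) hdisj, restrict_iUnion_fiber hS]

theorem ae_of_ae_restrict_fiber [Countable α] (hS : ∀ᵐ ω ∂μ, X ω ∈ S) {p : Ω → Prop}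
    (h : ∀ a ∈ S, ∀ᵐ ω ∂μ.restrict {ω | X ω = a}, p ω) : ∀ᵐ ω ∂μ, p ω := by
  rw [← restrict_iUnion_fiber hS, ae_restrict_iUnion_iff]
  exact fun a => h a a.2

theorem measurable_of_fiber [Countable α] {β : Type*} [MeasurableSpace β]
    (hX : ∀ a, MeasurableSet {ω | X ω = a}) {F : α → Ω → β} (hF : ∀ a, Measurable (F a)) : Measurable fun ω => F (X ω) ω := by
  intro s hs
  rw [show (fun ω => F (X ω) ω) ⁻¹' s = ⋃ a, {ω | X ω = a} ∩ F a ⁻¹' s by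
    ext ω; simp]
  exact MeasurableSet.iUnion fun a => (hX a).inter (hF a hs)

end Fibers

section Environment

variable {M : ℕ} {β r g1 : ℝ} {g0 : Base → Base → ℝ} {b : ℕ → Base}

theorem envp_nonneg_le_one (n : ℕ) : 0 ≤ envp M β g1 g0 b n ∧ envp M β g1 g0 b n ≤ 1 := by
  unfold envp
  split_ifs
  · exact ⟨zero_le_one, le_rfl⟩
  · have := exp_pos (β * (g0 (b n) (b (n + 1)) - g1))
    exact ⟨by positivity, inv_le_one_of_one_le₀ (by linarith)⟩
  · exact ⟨le_rfl, zero_le_one⟩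

theorem rateFun_pos (hr : 0 < r) (x : ℕ) : 0 < rateFun r β g1 g0 b x := by
  unfold rateFun
  split_ifs <;> positivity

theorem envp_mul_rateFun {x : ℕ} (hx1 : 2 ≤ x) (hx2 : x ≤ M - 1) :
    envp M β g1 g0 b x * rateFun r β g1 g0 b x = r * exp (-(β * g0 (b x) (b (x + 1)))) := by
  simp only [envp, rateFun, if_neg (show x ≠ 1 by omega), if_pos (And.intro hx1 hx2)]
  have hexp : exp (β * (g0 (b x) (b (x + 1)) - g1)) * exp (-(β * g0 (b x) (b (x + 1))))
      = exp (-(β * g1)) := by rw [← exp_add]; ring_nf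
  field_simp
  linear_combination (-r) * hexp

end Environment

/-- `S_x` of the paper for a trajectory `w` with holding times `τ`; the final state, where the
walk is stopped, carries no holding time. -/
def occupationTime (x : ℕ) (w : List ℕ) (τ : ℕ → ℝ) : ℝ :=
  ∑ i ∈ Finset.range (w.length - 1), if w.getD i 0 = x then τ i else 0

section OccupationTime

variable {Ω : Type*} [MeasurableSpace Ω] {P : Measure Ω} {M x : ℕ} {p c : ℕ → ℝ}
  {X : Ω → List ℕ} {T : Ω → ℕ → ℝ}

theorem pbar_eq_toReal_tsum (hp : ∀ n, 0 ≤ p n ∧ p n ≤ 1) :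
    pbar M p x = (∑' l : {l // IsEscapePath M x l}, ENNReal.ofReal (pathProb p l)).toReal := by
  rw [ENNReal.tsum_toReal_eq fun _ => ENNReal.ofReal_ne_top]
  exact tsum_congr fun l => (ENNReal.toReal_ofReal (pathProb_nonneg hp l)).symm

theorem ae_mem_isPath [IsProbabilityMeasure P] (hXmeas : ∀ w, MeasurableSet {ω | X ω = w})
    (hvalid : P {ω | IsPath M (X ω)} = 1) : ∀ᵐ ω ∂P, X ω ∈ {w | IsPath M w} := by
  rw [ae_iff_measure_eq (measurableSet_setOfPred.2
    (measurable_of_fiber hXmeas fun _ => measurable_const)).nullMeasurableSet, measure_univ]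
  exact hvalid

theorem tsum_pathProb_eq_one [IsProbabilityMeasure P]
    (hXmeas : ∀ w, MeasurableSet {ω | X ω = w}) (hvalid : P {ω | IsPath M (X ω)} = 1)
    (hlaw : ∀ w, IsPath M w → P {ω | X ω = w} = ENNReal.ofReal (pathProb p w)) :
    ∑' w : {w | IsPath M w}, ENNReal.ofReal (pathProb p w) = 1 := by
  calc ∑' w : {w | IsPath M w}, ENNReal.ofReal (pathProb p w)
      = ∑' w : {w | IsPath M w}, ∫⁻ _ in {ω | X ω = w}, 1 ∂P :=
        tsum_congr fun w => by rw [setLIntegral_one, hlaw w w.2]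
    _ = 1 := by
      rw [← lintegral_eq_tsum_fiber hXmeas (ae_mem_isPath hXmeas hvalid), lintegral_one,
        measure_univ]

theorem setLIntegral_occupationTime (hXmeas : ∀ w, MeasurableSet {ω | X ω = w})
    (hTmeas : ∀ i, Measurable fun ω => T ω i) (hp : ∀ n, 0 ≤ p n ∧ p n ≤ 1) (hc : 0 < c x)
    {w : List ℕ} (hlaw : P {ω | X ω = w} = ENNReal.ofReal (pathProb p w))
    (hhold : ∀ i, i + 1 < w.length → ∀ t : ℝ, 0 ≤ t → P ({ω | X ω = w} ∩ {ω | T ω i ≤ t})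
      = ENNReal.ofReal (pathProb p w * (1 - exp (-(c (w.getD i 0) * t))))) :
    (∀ᵐ ω ∂P.restrict {ω | X ω = w}, 0 ≤ occupationTime x (X ω) (T ω)) ∧
      ∫⁻ ω in {ω | X ω = w}, ENNReal.ofReal (occupationTime x (X ω) (T ω)) ∂P
        = ∑ i ∈ Finset.range (w.length - 1),
            if w.getD i 0 = x then ENNReal.ofReal (pathProb p w) / ENNReal.ofReal (c x) else 0 := by
  have hfin : IsFiniteMeasure (P.restrict {ω | X ω = w}) :=
    ⟨by rw [Measure.restrict_apply_univ, hlaw]; exact ENNReal.ofReal_lt_top⟩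
  set I := (Finset.range (w.length - 1)).filter (fun i => w.getD i 0 = x)
  have hcdf : ∀ i ∈ I, ∀ t : ℝ, 0 ≤ t → (P.restrict {ω | X ω = w}) {ω | T ω i ≤ t}
      = (P.restrict {ω | X ω = w}) Set.univ * ENNReal.ofReal (1 - exp (-(c x * t))) := by
    intro i hi t ht
    obtain ⟨hi, hix⟩ := Finset.mem_filter.1 hi
    rw [Measure.restrict_apply (measurableSet_le (hTmeas i) measurable_const),
      Measure.restrict_apply_univ, Set.inter_comm, hlaw,
      ← ENNReal.ofReal_mul (pathProb_nonneg hp w), hhold i (by have := Finset.mem_range.1 hi; omega) t ht, hix]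
  obtain ⟨hnn, hint⟩ :=
    lintegral_ofReal_sum_of_exponential_cdf (μ := P.restrict {ω | X ω = w}) hTmeas I hc hcdf
  have hfiber : ∀ᵐ ω ∂P.restrict {ω | X ω = w},
      occupationTime x (X ω) (T ω) = ∑ i ∈ I, T ω i := by
    filter_upwards [ae_restrict_mem (hXmeas w)] with ω hω
    rw [show X ω = w from hω, occupationTime, Finset.sum_filter]
  refine ⟨?_, ?_⟩
  · filter_upwards [hfiber, hnn] with ω h1 h2
    rwa [h1]
  · rw [lintegral_congr_ae (hfiber.mono fun ω h => by rw [h]), hint, Measure.restrict_apply_univ,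
      hlaw, ← Finset.sum_filter, Finset.sum_const, nsmul_eq_mul]

theorem integral_occupationTime [IsProbabilityMeasure P]
    (hXmeas : ∀ w, MeasurableSet {ω | X ω = w}) (hTmeas : ∀ i, Measurable fun ω => T ω i)
    (hvalid : P {ω | IsPath M (X ω)} = 1) (hp : ∀ n, 0 ≤ p n ∧ p n ≤ 1) (hc : 0 < c x)
    (hx : 1 ≤ x) (hxM : x < M)
    (hlaw : ∀ w, IsPath M w → P {ω | X ω = w} = ENNReal.ofReal (pathProb p w))
    (hhold : ∀ w, IsPath M w → ∀ i, i + 1 < w.length → ∀ t : ℝ, 0 ≤ t →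
      P ({ω | X ω = w} ∩ {ω | T ω i ≤ t})
        = ENNReal.ofReal (pathProb p w * (1 - exp (-(c (w.getD i 0) * t))))) :
    ∫ ω, occupationTime x (X ω) (T ω) ∂P = (p x * c x * pbar M p x)⁻¹ := by
  have hS := ae_mem_isPath hXmeas hvalid
  have hfiber := fun w (hw : w ∈ {w | IsPath M w}) =>
    setLIntegral_occupationTime hXmeas hTmeas hp hc (hlaw w hw) (hhold w hw)
  have hmeas : Measurable fun ω => occupationTime x (X ω) (T ω) :=
    measurable_of_fiber hXmeas (F := fun w ω => occupationTime x w (T ω)) fun w =>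
      Finset.measurable_sum _ fun i _ => Measurable.ite (.const _) (hTmeas i) measurable_const
  rw [integral_eq_lintegral_of_nonneg_ae (ae_of_ae_restrict_fiber hS fun w hw => (hfiber w hw).1)
      hmeas.aestronglyMeasurable, lintegral_eq_tsum_fiber hXmeas hS,
    tsum_congr fun w : {w | IsPath M w} => (hfiber w w.2).2,
    tsum_sum_visits_eq_tsum_append_cons _ x 0 fun w =>
      ENNReal.ofReal (pathProb p w) / ENNReal.ofReal (c x)]
  simp_rw [div_eq_mul_inv]
  rw [ENNReal.tsum_mul_right,
    tsum_visits_eq_inv hp hx hxM (tsum_pathProb_eq_one hXmeas hvalid hlaw),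
    ENNReal.toReal_mul, ENNReal.toReal_inv, ENNReal.toReal_mul, ENNReal.toReal_inv,
    ENNReal.toReal_ofReal (hp x).1, ENNReal.toReal_ofReal hc.le, pbar_eq_toReal_tsum hp]
  ring

end OccupationTime

theorem stmt_4_general {Ω : Type} [MeasurableSpace Ω] (P : Measure Ω) [IsProbabilityMeasure P]
    (M : ℕ) (β r g1 : ℝ) (hr : 0 < r)
    (g0 : Base → Base → ℝ) (b : ℕ → Base)
    (X : Ω → List ℕ) (T : Ω → ℕ → ℝ)
    (hXmeas : ∀ w : List ℕ, MeasurableSet {ω | X ω = w})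
    (hTmeas : ∀ i : ℕ, Measurable fun ω => T ω i)
    (hvalid : P {ω | IsPath M (X ω)} = 1)
    (hjoint : ∀ w : List ℕ, IsPath M w → ∀ s : Finset ℕ, (∀ i ∈ s, i + 1 < w.length) →
      ∀ t : ℕ → ℝ, (∀ i ∈ s, 0 ≤ t i) →
      P ({ω | X ω = w} ∩ ⋂ i ∈ s, {ω | T ω i ≤ t i})
        = ENNReal.ofReal (pathProb (envp M β g1 g0 b) w *
            ∏ i ∈ s, (1 - Real.exp (-(rateFun r β g1 g0 b (w.getD i 0) * t i)))))
    (x : ℕ) (hx1 : 2 ≤ x) (hx2 : x ≤ M - 1) :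
    ∫ ω, (∑ i ∈ Finset.range ((X ω).length - 1),
        if (X ω).getD i 0 = x then T ω i else 0) ∂P
      = Real.exp (β * g0 (b x) (b (x + 1))) / (r * pbar M (envp M β g1 g0 b) x) := by
  refine (integral_occupationTime (p := envp M β g1 g0 b) (c := rateFun r β g1 g0 b) hXmeas
    hTmeas hvalid envp_nonneg_le_one (rateFun_pos hr x) (by omega) (by omega) (fun w hw => ?_)
    (fun w hw i hi t ht => ?_)).trans ?_
  · simpa using hjoint w hw ∅ (by simp) 0 (by simp)
  · simpa only [Finset.set_biInter_singleton, Finset.prod_singleton] using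
      hjoint w hw {i} (by simpa using hi) (fun _ => t) (by simp [ht])
  · rw [envp_mul_rateFun hx1 hx2, exp_neg, mul_inv, mul_inv, inv_inv]
    ring

/-- For the continuous-time unzipping process (jump chain `X`, i.i.d.
exponential holding times `T i` of the indicated rates, conditionally on `X`), the total
time `S_x` spent at a site `2 ≤ x ≤ M-1` before the jump chain hits `M` satisfies
`E[S_x] = e^{β g₀(b_x,b_{x+1})} / (r p̄_x)`. -/
theorem stmt_4 {Ω : Type} [MeasurableSpace Ω] (P : Measure Ω) [IsProbabilityMeasure P]
    (M : ℕ) (hM : 3 ≤ M) (β r g1 : ℝ) (hβ : 0 < β) (hr : 0 < r)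
    (g0 : Base → Base → ℝ) (b : ℕ → Base)
    (X : Ω → List ℕ) (T : Ω → ℕ → ℝ)
    (hXmeas : ∀ w : List ℕ, MeasurableSet {ω | X ω = w})
    (hTmeas : ∀ i : ℕ, Measurable fun ω => T ω i)
    (hvalid : P {ω | IsPath M (X ω)} = 1)
    (hjoint : ∀ w : List ℕ, IsPath M w → ∀ s : Finset ℕ, (∀ i ∈ s, i + 1 < w.length) →
      ∀ t : ℕ → ℝ, (∀ i ∈ s, 0 ≤ t i) →
      P ({ω | X ω = w} ∩ ⋂ i ∈ s, {ω | T ω i ≤ t i})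
        = ENNReal.ofReal (pathProb (envp M β g1 g0 b) w *
            ∏ i ∈ s, (1 - Real.exp (-(rateFun r β g1 g0 b (w.getD i 0) * t i)))))
    (x : ℕ) (hx1 : 2 ≤ x) (hx2 : x ≤ M - 1) :
    ∫ ω, (∑ i ∈ Finset.range ((X ω).length - 1),
        if (X ω).getD i 0 = x then T ω i else 0) ∂P
      = Real.exp (β * g0 (b x) (b (x + 1))) / (r * pbar M (envp M β g1 g0 b) x) :=
  stmt_4_general P M β r g1 hr g0 b X T hXmeas hTmeas hvalid hjoint x hx1 hx2
end

section
/- Fix β > 0 and a ∈ ℝ, and define G_a(u) := log((1+e^{βu})/(1+e^{βa})) + e^{βa}·log((1+e^{−βu})/(1+e^{−βa})) for u ∈ ℝ. Then G_a(u) ≥ 0 for all u ∈ ℝ, G_a(a) = 0, and G_a(u) > 0 whenever u ≠ a. -/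
open scoped BigOperators Topology Classical
open Real MeasureTheory Filter

/-!
With `c = e^{βa}` and `x = e^{βu}` one has
`G_a(u) = (1 + c) log((1 + x)/(1 + c)) - c log(x/c)`, and strict concavity of `log`
at the points `x/c` and `1` with weights `c/(1+c)` and `1/(1+c)` shows that this is positive
unless `x = c`, i.e. `u = a`.
-/

/-- The function `G_a(u) = log((1+e^{βu})/(1+e^{βa})) + e^{βa}·log((1+e^{-βu})/(1+e^{-βa}))`. -/
noncomputable def Gfun (β a u : ℝ) : ℝ :=
  Real.log ((1 + Real.exp (β * u)) / (1 + Real.exp (β * a)))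
    + Real.exp (β * a) * Real.log ((1 + Real.exp (-(β * u))) / (1 + Real.exp (-(β * a))))

theorem mul_log_div_lt_one_add_mul_log_one_add_div {c x : ℝ} (hc : 0 < c) (hx : 0 < x) (hxc : x ≠ c) :
    c * log (x / c) < (1 + c) * log ((1 + x) / (1 + c)) := by
  have hc1 : 0 < 1 + c := by positivity
  have hxc' : x / c ≠ 1 := fun h => hxc ((div_eq_one_iff_eq hc.ne').1 h)
  have hconc := strictConcaveOn_log_Ioi.2 (Set.mem_Ioi.2 (div_pos hx hc))
    (Set.mem_Ioi.2 one_pos) hxc' (div_pos hc hc1) (div_pos one_pos hc1)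
    (by field_simp; ring)
  have hmid : c / (1 + c) * (x / c) + 1 / (1 + c) * 1 = (1 + x) / (1 + c) := by
    field_simp; ring
  simp only [smul_eq_mul, log_one, mul_zero, add_zero, hmid] at hconc
  calc c * log (x / c) = (1 + c) * (c / (1 + c) * log (x / c)) := by field_simp
    _ < (1 + c) * log ((1 + x) / (1 + c)) := mul_lt_mul_of_pos_left hconc hc1

theorem Gfun_eq (β a u : ℝ) :
    Gfun β a u = (1 + exp (β * a)) * log ((1 + exp (β * u)) / (1 + exp (β * a)))
      - exp (β * a) * log (exp (β * u) / exp (β * a)) := by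
  rw [Gfun, exp_neg, exp_neg]
  have hx : 0 < exp (β * u) := exp_pos _
  have hc : 0 < exp (β * a) := exp_pos _
  generalize exp (β * u) = x at hx ⊢
  generalize exp (β * a) = c at hc ⊢
  have hflip : (1 + x⁻¹) / (1 + c⁻¹) = (1 + x) / (1 + c) / (x / c) := by
    field_simp
    ring
  rw [hflip, log_div (x := (1 + x) / (1 + c)) (by positivity) (by positivity)]
  ring

/-- `G_a(u) ≥ 0` for all `u`, `G_a(a) = 0`, and `G_a(u) > 0` for `u ≠ a`. -/
theorem stmt_8 (β a : ℝ) (hβ : 0 < β) :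
    (∀ u : ℝ, 0 ≤ Gfun β a u) ∧ Gfun β a a = 0 ∧ ∀ u : ℝ, u ≠ a → 0 < Gfun β a u := by
  have hzero : Gfun β a a = 0 := by simp [Gfun_eq]
  have hpos : ∀ u : ℝ, u ≠ a → 0 < Gfun β a u := by
    intro u hu
    have hne : exp (β * u) ≠ exp (β * a) := by
      rw [Ne, exp_eq_exp, mul_right_inj' hβ.ne']
      exact hu
    rw [Gfun_eq, sub_pos]
    exact mul_log_div_lt_one_add_mul_log_one_add_div (exp_pos _) (exp_pos _) hne
  refine ⟨fun u => ?_, hzero, hpos⟩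
  rcases eq_or_ne u a with rfl | hu
  · exact hzero.ge
  · exact (hpos u hu).le
end

section
/- Let B = {A,T,C,G}, let g_0 : B × B → ℝ satisfy Hypothesis (Hyp1), let β > 0, let b ∈ B^M, and let w_1,…,w_{M−1} be strictly positive reals. Define Φ(α) := Σ_{x=1}^{M−1} w_x·( β g_0(α_x,α_{x+1}) + exp(−β( g_0(α_x,α_{x+1}) − g_0(b_x,b_{x+1}) )) ) for α ∈ B^M. Then among all α ∈ B^M with α_1 = b_1, the function Φ attains its minimum uniquely at α = b; that is, Φ(α) > Φ(b) for every α ≠ b with α_1 = b_1. -/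
/-!
Each summand of `Φ`, viewed as a function of `t = g₀(α_x, α_{x+1})`, is
`β t + exp(-β (t - s))` with `s = g₀(b_x, b_{x+1})`; by `exp u ≥ 1 + u` it is at least `β s + 1`,
with equality only at `t = s`. Since `α_1 = b_1`, at the first index `y + 1` where `α` departs
from `b` we have `α_y = b_y`, so injectivity of `g₀(b_y, ·)` makes the `y`-th summand strictly
larger than its value at `b`.
-/

open scoped BigOperators Topology Classical
open Real MeasureTheory Filter

/-- The function `Φ(α) = Σ_{x=1}^{M-1} w_x (β g₀(α_x,α_{x+1})
  + exp(-β(g₀(α_x,α_{x+1}) - g₀(b_x,b_{x+1}))))`. -/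
noncomputable def Phi (M : ℕ) (β : ℝ) (g0 : Base → Base → ℝ) (b : ℕ → Base)
    (w : ℕ → ℝ) (α : ℕ → Base) : ℝ :=
  ∑ x ∈ Finset.Icc 1 (M - 1),
    w x * (β * g0 (α x) (α (x + 1))
      + Real.exp (-(β * (g0 (α x) (α (x + 1)) - g0 (b x) (b (x + 1))))))

lemma mul_add_exp_neg_mul_sub_le (β s t : ℝ) :
    β * s + Real.exp (-(β * (s - s))) ≤ β * t + Real.exp (-(β * (t - s))) := by
  have h := Real.add_one_le_exp (-(β * (t - s)))
  rw [sub_self, mul_zero, neg_zero, Real.exp_zero]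
  linarith

lemma mul_add_exp_neg_mul_sub_lt {β s t : ℝ} (hβ : β ≠ 0) (hts : t ≠ s) :
    β * s + Real.exp (-(β * (s - s))) < β * t + Real.exp (-(β * (t - s))) := by
  have hne : -(β * (t - s)) ≠ 0 := neg_ne_zero.2 (mul_ne_zero hβ (sub_ne_zero.2 hts))
  have h := Real.add_one_lt_exp hne
  rw [sub_self, mul_zero, neg_zero, Real.exp_zero]
  linarith

lemma exists_eq_and_succ_ne {X : Type*} {α b : ℕ → X} {n m : ℕ} (hn : α n = b n)
    (hnm : n ≤ m) (hm : α m ≠ b m) :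
    ∃ y, n ≤ y ∧ y < m ∧ α y = b y ∧ α (y + 1) ≠ b (y + 1) := by
  induction m, hnm using Nat.le_induction with
  | base => exact absurd hn hm
  | succ k hnk ih =>
    by_cases hk : α k = b k
    · exact ⟨k, hnk, k.lt_succ_self, hk, hm⟩
    · obtain ⟨y, hny, hyk, hy, hy1⟩ := ih hk
      exact ⟨y, hny, hyk.trans k.lt_succ_self, hy, hy1⟩

theorem stmt_16_general (M : ℕ) (β : ℝ) (hβ : 0 < β)
    (g0 : Base → Base → ℝ)
    (hinj : ∀ a : Base, Function.Injective (fun γ => g0 a γ)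
      ∧ Function.Injective (fun γ => g0 γ a))
    (b : ℕ → Base) (w : ℕ → ℝ) (hw : ∀ x, 1 ≤ x → x ≤ M - 1 → 0 < w x) :
    ∀ α : ℕ → Base, α 1 = b 1 → (∃ x, 1 ≤ x ∧ x ≤ M ∧ α x ≠ b x) →
      Phi M β g0 b w b < Phi M β g0 b w α := by
  rintro α h1 ⟨x, hx1, hxM, hx⟩
  obtain ⟨y, hy1, hyx, hy, hy_succ⟩ := exists_eq_and_succ_ne h1 hx1 hx
  have hyM : y ≤ M - 1 := by omega
  have hg : g0 (α y) (α (y + 1)) ≠ g0 (b y) (b (y + 1)) := by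
    rw [hy]
    exact fun h => hy_succ ((hinj (b y)).1 h)
  refine Finset.sum_lt_sum (fun i hi => ?_) ⟨y, Finset.mem_Icc.2 ⟨hy1, hyM⟩, ?_⟩
  · obtain ⟨hi1, hiM⟩ := Finset.mem_Icc.1 hi
    exact mul_le_mul_of_nonneg_left (mul_add_exp_neg_mul_sub_le _ _ _) (hw i hi1 hiM).le
  · exact mul_lt_mul_of_pos_left (mul_add_exp_neg_mul_sub_lt hβ.ne' hg) (hw y hy1 hyM)

/-- Under Hypothesis (Hyp1) and with positive weights, among all
`α ∈ B^M` with `α_1 = b_1` the function `Φ` attains its minimum uniquely at `α = b`: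
`Φ(b) < Φ(α)` for every `α ≠ b` (on the coordinates `1,…,M`) with `α_1 = b_1`. -/
theorem stmt_16 (M : ℕ) (hM : 2 ≤ M) (β : ℝ) (hβ : 0 < β)
    (g0 : Base → Base → ℝ)
    (hinj : ∀ a : Base, Function.Injective (fun γ => g0 a γ)
      ∧ Function.Injective (fun γ => g0 γ a))
    (b : ℕ → Base) (w : ℕ → ℝ) (hw : ∀ x, 1 ≤ x → x ≤ M - 1 → 0 < w x) :
    ∀ α : ℕ → Base, α 1 = b 1 → (∃ x, 1 ≤ x ∧ x ≤ M ∧ α x ≠ b x) →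
      Phi M β g0 b w b < Phi M β g0 b w α :=
  stmt_16_general M β hβ g0 hinj b w hw
end
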